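/- Let φ : [0,2] → ℝ be twice continuously differentiable and let k ∈ (0,2) be such that φ''(t) < 0 for t ∈ [0,k) and φ''(t) > 0 for t ∈ (k,2]. Let β ∈ (0,1) satisfy φ(2β) − φ(β) = β·φ'(β), and define Γ : [0,1] → [0,1] by Γ(x) = β − x for x ∈ [0,β) and Γ(x) = x for x ∈ [β,1]. Then the pushforward π* of Lebesgue measure on [0,1] under x ↦ (x, Γ(x)) is a doubly stochastic measure on [0,1]², and for every doubly stochastic measure π on [0,1]², ∫ φ(x+y) dπ(x,y) ≤ ∫ φ(x+y) dπ*(x,y) = ∫₀¹ φ(x + Γ(x)) dx. -/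

import Mathlib

open MeasureTheory Set

/-- A doubly stochastic measure on `[0,1]²`. -/
def IsDoublyStochastic (π : Measure (ℝ × ℝ)) : Prop :=
  IsProbabilityMeasure π ∧
  (∀ B : Set ℝ, MeasurableSet B → B ⊆ Icc 0 1 → π (B ×ˢ Icc (0:ℝ) 1) = volume B) ∧
  (∀ B : Set ℝ, MeasurableSet B → B ⊆ Icc 0 1 → π (Icc (0:ℝ) 1 ×ˢ B) = volume B)

/-!
Put `g t = φ t - φ' β * t` and `F x = (g (2 max(x, β)) + φ' β * 2x) / 2`, i.e. `dualPotential`.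
The mean value theorem on `[β, 2β]` gives a point where `φ'` takes the value `φ' β`, which puts
the inflection point `k` in `(β, 2β)`. Hence `g` increases on `[0, β]`, decreases on `[β, k]` and
is convex on `[k, 2]`, and `g (2β) = g β`: so `g ≤ g β` on `[0, 2β]`, `g ≥ g β` on `[2β, 2]`.
This yields `φ (x + y) ≤ F x + F y` on `[0,1]²`, with equality on the graph of `Γ`.
Integrating against a doubly stochastic `π` bounds `∫ φ (x + y) dπ` by `2 ∫₀¹ F`, and since `Γ`
preserves Lebesgue measure on `[0,1]`, the graph coupling attains this bound.
-/

instance : IsProbabilityMeasure (volume.restrict (Icc (0:ℝ) 1)) := ⟨by simp⟩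

namespace IsDoublyStochastic

variable {π : Measure (ℝ × ℝ)}

lemma measure_unitSquare_compl (hπ : IsDoublyStochastic π) :
    π (Icc (0:ℝ) 1 ×ˢ Icc (0:ℝ) 1)ᶜ = 0 := by
  have := hπ.1
  rw [measure_compl (measurableSet_Icc.prod measurableSet_Icc) (measure_ne_top _ _),
    hπ.2.1 _ measurableSet_Icc subset_rfl]
  simp

lemma ae_mem_unitSquare (hπ : IsDoublyStochastic π) :
    ∀ᵐ p ∂π, p ∈ Icc (0:ℝ) 1 ×ˢ Icc (0:ℝ) 1 :=
  mem_ae_iff.2 hπ.measure_unitSquare_compl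

lemma map_fst (hπ : IsDoublyStochastic π) :
    π.map Prod.fst = volume.restrict (Icc 0 1) := by
  ext B hB
  rw [Measure.map_apply measurable_fst hB, Measure.restrict_apply hB,
    ← measure_inter_conull hπ.measure_unitSquare_compl, ← prod_univ, prod_inter_prod,
    univ_inter, hπ.2.1 _ (hB.inter measurableSet_Icc) inter_subset_right]

lemma map_snd (hπ : IsDoublyStochastic π) :
    π.map Prod.snd = volume.restrict (Icc 0 1) := by
  ext B hB
  rw [Measure.map_apply measurable_snd hB, Measure.restrict_apply hB,
    ← measure_inter_conull hπ.measure_unitSquare_compl, ← univ_prod, prod_inter_prod,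
    univ_inter, hπ.2.2 _ (hB.inter measurableSet_Icc) inter_subset_right]

lemma integrable_of_continuousOn (hπ : IsDoublyStochastic π) {c : ℝ × ℝ → ℝ}
    (hc : ContinuousOn c (Icc 0 1 ×ˢ Icc 0 1)) : Integrable c π := by
  have := hπ.1
  rw [← Measure.restrict_eq_self_of_ae_mem hπ.ae_mem_unitSquare]
  exact hc.integrableOn_compact (isCompact_Icc.prod isCompact_Icc)

variable {F G : ℝ → ℝ}

lemma integrable_comp_fst (hπ : IsDoublyStochastic π) (hF : IntegrableOn F (Icc 0 1)) :
    Integrable (fun p : ℝ × ℝ => F p.1) π := by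
  rw [IntegrableOn, ← hπ.map_fst] at hF
  exact (integrable_map_measure hF.1 measurable_fst.aemeasurable).1 hF

lemma integrable_comp_snd (hπ : IsDoublyStochastic π) (hG : IntegrableOn G (Icc 0 1)) :
    Integrable (fun p : ℝ × ℝ => G p.2) π := by
  rw [IntegrableOn, ← hπ.map_snd] at hG
  exact (integrable_map_measure hG.1 measurable_snd.aemeasurable).1 hG

lemma integral_fst_add_snd (hπ : IsDoublyStochastic π)
    (hF : IntegrableOn F (Icc 0 1)) (hG : IntegrableOn G (Icc 0 1)) :
    ∫ p, F p.1 + G p.2 ∂π = (∫ x in Icc 0 1, F x) + ∫ y in Icc 0 1, G y := by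
  rw [integral_add (hπ.integrable_comp_fst hF) (hπ.integrable_comp_snd hG)]
  rw [IntegrableOn, ← hπ.map_fst] at hF
  rw [IntegrableOn, ← hπ.map_snd] at hG
  rw [← integral_map measurable_fst.aemeasurable hF.1,
    ← integral_map measurable_snd.aemeasurable hG.1, hπ.map_fst, hπ.map_snd]

lemma integral_le_of_le_add (hπ : IsDoublyStochastic π) {c : ℝ × ℝ → ℝ}
    (hc : ContinuousOn c (Icc 0 1 ×ˢ Icc 0 1))
    (hF : IntegrableOn F (Icc 0 1)) (hG : IntegrableOn G (Icc 0 1))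
    (hle : ∀ x ∈ Icc (0:ℝ) 1, ∀ y ∈ Icc (0:ℝ) 1, c (x, y) ≤ F x + G y) :
    ∫ p, c p ∂π ≤ (∫ x in Icc 0 1, F x) + ∫ y in Icc 0 1, G y := by
  rw [← hπ.integral_fst_add_snd hF hG]
  refine integral_mono_ae (hπ.integrable_of_continuousOn hc)
    ((hπ.integrable_comp_fst hF).add (hπ.integrable_comp_snd hG)) ?_
  filter_upwards [hπ.ae_mem_unitSquare] with p hp
  exact hle p.1 hp.1 p.2 hp.2

end IsDoublyStochastic

section Graph

variable {T : ℝ → ℝ}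

lemma isDoublyStochastic_map_graph
    (hT : MeasurePreserving T (volume.restrict (Icc 0 1)) (volume.restrict (Icc 0 1))) :
    IsDoublyStochastic (Measure.map (fun x => (x, T x)) (volume.restrict (Icc (0:ℝ) 1))) := by
  have hgraph : Measurable fun x => (x, T x) := measurable_id.prodMk hT.measurable
  have hnull : ∀ {S : Set ℝ}, MeasurableSet S → S ⊆ (Icc 0 1)ᶜ →
      volume.restrict (Icc (0:ℝ) 1) S = 0 := fun hS hsub => by
    rw [Measure.restrict_apply hS, (subset_compl_iff_disjoint_right.1 hsub).inter_eq, measure_empty]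
  have hTmem : volume.restrict (Icc (0:ℝ) 1) (T ⁻¹' Icc 0 1)ᶜ = 0 := by
    rw [← preimage_compl, hT.measure_preimage measurableSet_Icc.compl.nullMeasurableSet,
      hnull measurableSet_Icc.compl subset_rfl]
  refine ⟨Measure.isProbabilityMeasure_map hgraph.aemeasurable, fun B hB hBsub => ?_,
    fun B hB hBsub => ?_⟩
  · rw [Measure.map_apply hgraph (hB.prod measurableSet_Icc), mk_preimage_prod, preimage_id',
      measure_inter_conull hTmem, Measure.restrict_apply hB, inter_eq_left.2 hBsub]
  · rw [Measure.map_apply hgraph (measurableSet_Icc.prod hB), mk_preimage_prod, preimage_id',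
      inter_comm, measure_inter_conull (hnull measurableSet_Icc.compl subset_rfl),
      hT.measure_preimage hB.nullMeasurableSet, Measure.restrict_apply hB,
      inter_eq_left.2 hBsub]

lemma integral_map_graph
    (hT : MeasurePreserving T (volume.restrict (Icc 0 1)) (volume.restrict (Icc 0 1)))
    {c : ℝ × ℝ → ℝ} (hc : ContinuousOn c (Icc 0 1 ×ˢ Icc 0 1)) :
    ∫ p, c p ∂(Measure.map (fun x => (x, T x)) (volume.restrict (Icc (0:ℝ) 1))) =
      ∫ x in Icc 0 1, c (x, T x) :=
  integral_map (measurable_id.prodMk hT.measurable).aemeasurable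
    ((isDoublyStochastic_map_graph hT).integrable_of_continuousOn hc).1

lemma integral_map_graph_eq_add
    (hT : MeasurePreserving T (volume.restrict (Icc 0 1)) (volume.restrict (Icc 0 1)))
    {c : ℝ × ℝ → ℝ} {F G : ℝ → ℝ} (hc : ContinuousOn c (Icc 0 1 ×ˢ Icc 0 1))
    (hF : IntegrableOn F (Icc 0 1)) (hG : IntegrableOn G (Icc 0 1))
    (heq : ∀ x ∈ Icc (0:ℝ) 1, c (x, T x) = F x + G (T x)) :
    ∫ p, c p ∂(Measure.map (fun x => (x, T x)) (volume.restrict (Icc (0:ℝ) 1))) =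
      (∫ x in Icc 0 1, F x) + ∫ y in Icc 0 1, G y := by
  rw [integral_map_graph hT hc, setIntegral_congr_fun measurableSet_Icc heq,
    integral_add hF (g := fun x => G (T x)) (hT.integrable_comp_of_integrable hG)]
  congr 1
  conv_rhs => rw [← hT.map_eq]
  exact (integral_map hT.aemeasurable (by rw [hT.map_eq]; exact hG.1)).symm

end Graph

noncomputable def reflectBelow (β x : ℝ) : ℝ := if x < β then β - x else x

lemma measurable_reflectBelow (β : ℝ) : Measurable (reflectBelow β) :=
  Measurable.ite measurableSet_Iio (measurable_const.sub measurable_id) measurable_id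

lemma measurePreserving_reflectBelow {β : ℝ} (hβ₀ : 0 < β) (hβ₁ : β ≤ 1) :
    MeasurePreserving (reflectBelow β) (volume.restrict (Icc 0 1))
      (volume.restrict (Icc 0 1)) := by
  have hsplit : volume.restrict (Icc (0:ℝ) 1) =
      volume.restrict (Ioo 0 β) + volume.restrict (Icc β 1) := by
    rw [← Measure.restrict_congr_set Ioc_ae_eq_Icc, ← Ioo_union_Icc_eq_Ioc hβ₀ hβ₁,
      Measure.restrict_union
        ((Iio_disjoint_Ici le_rfl).mono Ioo_subset_Iio_self Icc_subset_Ici_self) measurableSet_Icc]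
  have hreflect : Measure.map (reflectBelow β) (volume.restrict (Ioo 0 β)) =
      volume.restrict (Ioo 0 β) := by
    rw [Measure.map_congr (f := reflectBelow β) (g := fun x => β - x)
      ((ae_restrict_iff' measurableSet_Ioo).2 (ae_of_all _ fun x hx => if_pos hx.2))]
    simpa using ((Measure.measurePreserving_sub_left volume β).restrict_preimage
      (s := Ioo 0 β) measurableSet_Ioo).map_eq
  have hfix : Measure.map (reflectBelow β) (volume.restrict (Icc β 1)) =
      volume.restrict (Icc β 1) := by
    rw [Measure.map_congr (f := reflectBelow β) (g := id)
      ((ae_restrict_iff' measurableSet_Icc).2 (ae_of_all _ fun x hx => if_neg (not_lt.2 hx.1))),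
      Measure.map_id]
  refine ⟨measurable_reflectBelow β, ?_⟩
  rw [hsplit, Measure.map_add _ _ (measurable_reflectBelow β), hreflect, hfix]

section Calculus

variable {f f' : ℝ → ℝ} {a b c d : ℝ}

lemma hasDerivAt_of_mem_Ioo (hf : ∀ t ∈ Icc a b, HasDerivWithinAt f (f' t) (Icc a b) t)
    {t : ℝ} (ht : t ∈ Ioo a b) : HasDerivAt f (f' t) t :=
  (hf t (Ioo_subset_Icc_self ht)).hasDerivAt (Icc_mem_nhds ht.1 ht.2)

lemma hasDerivWithinAt_interior_Icc (hf : ∀ t ∈ Icc a b, HasDerivWithinAt f (f' t) (Icc a b) t)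
    (hac : a ≤ c) (hdb : d ≤ b) :
    ∀ t ∈ interior (Icc c d), HasDerivWithinAt f (f' t) (interior (Icc c d)) t := by
  intro t ht
  rw [interior_Icc] at ht
  exact (hasDerivAt_of_mem_Ioo hf (Ioo_subset_Ioo hac hdb ht)).hasDerivWithinAt

lemma continuousOn_Icc_of_hasDerivWithinAt
    (hf : ∀ t ∈ Icc a b, HasDerivWithinAt f (f' t) (Icc a b) t) (hac : a ≤ c) (hdb : d ≤ b) :
    ContinuousOn f (Icc c d) :=
  fun t ht => ((hf t (Icc_subset_Icc hac hdb ht)).continuousWithinAt).mono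
    (Icc_subset_Icc hac hdb)

lemma strictAntiOn_Icc_of_hasDerivWithinAt_neg
    (hf : ∀ t ∈ Icc a b, HasDerivWithinAt f (f' t) (Icc a b) t) (hac : a ≤ c) (hdb : d ≤ b)
    (hneg : ∀ t ∈ Ioo c d, f' t < 0) : StrictAntiOn f (Icc c d) :=
  strictAntiOn_of_hasDerivWithinAt_neg (convex_Icc c d)
    (continuousOn_Icc_of_hasDerivWithinAt hf hac hdb) (hasDerivWithinAt_interior_Icc hf hac hdb)
    fun t ht => hneg t (by rwa [interior_Icc] at ht)

lemma strictMonoOn_Icc_of_hasDerivWithinAt_pos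
    (hf : ∀ t ∈ Icc a b, HasDerivWithinAt f (f' t) (Icc a b) t) (hac : a ≤ c) (hdb : d ≤ b)
    (hpos : ∀ t ∈ Ioo c d, 0 < f' t) : StrictMonoOn f (Icc c d) :=
  strictMonoOn_of_hasDerivWithinAt_pos (convex_Icc c d)
    (continuousOn_Icc_of_hasDerivWithinAt hf hac hdb) (hasDerivWithinAt_interior_Icc hf hac hdb)
    fun t ht => hpos t (by rwa [interior_Icc] at ht)

end Calculus

section ConcaveConvex

variable {φ φ' φ'' : ℝ → ℝ} {k β : ℝ}

lemma hasDerivWithinAt_sub_mul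
    (hd1 : ∀ t ∈ Icc (0:ℝ) 2, HasDerivWithinAt φ (φ' t) (Icc 0 2) t) (s : ℝ) :
    ∀ t ∈ Icc (0:ℝ) 2, HasDerivWithinAt (fun t => φ t - s * t) (φ' t - s) (Icc 0 2) t :=
  fun t ht => ((hd1 t ht).sub ((hasDerivWithinAt_id t _).const_mul s)).congr_deriv (by ring)

lemma convexOn_sub_mul (hd1 : ∀ t ∈ Icc (0:ℝ) 2, HasDerivWithinAt φ (φ' t) (Icc 0 2) t)
    (hd2 : ∀ t ∈ Icc (0:ℝ) 2, HasDerivWithinAt φ' (φ'' t) (Icc 0 2) t) (hk : 0 ≤ k)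
    (hconv : ∀ t ∈ Ioc k 2, 0 < φ'' t) (s : ℝ) :
    ConvexOn ℝ (Icc k 2) (fun t => φ t - s * t) :=
  convexOn_of_hasDerivWithinAt2_nonneg (convex_Icc k 2)
    (continuousOn_Icc_of_hasDerivWithinAt (hasDerivWithinAt_sub_mul hd1 s) hk le_rfl)
    (hasDerivWithinAt_interior_Icc (hasDerivWithinAt_sub_mul hd1 s) hk le_rfl)
    (hasDerivWithinAt_interior_Icc (fun t ht => (hd2 t ht).sub_const s) hk le_rfl)
    fun t ht => (hconv t (Ioo_subset_Ioc_self (by rwa [interior_Icc] at ht))).le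

lemma inflection_mem_Ioo (hd1 : ∀ t ∈ Icc (0:ℝ) 2, HasDerivWithinAt φ (φ' t) (Icc 0 2) t)
    (hd2 : ∀ t ∈ Icc (0:ℝ) 2, HasDerivWithinAt φ' (φ'' t) (Icc 0 2) t) (hk : k ∈ Ioo (0:ℝ) 2)
    (hconc : ∀ t ∈ Ico (0:ℝ) k, φ'' t < 0) (hconv : ∀ t ∈ Ioc k 2, 0 < φ'' t)
    (hβ : β ∈ Ioo (0:ℝ) 1) (hβeq : φ (2 * β) - φ β = β * φ' β) :
    k ∈ Ioo β (2 * β) := by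
  obtain ⟨hβ₀, hβ₁⟩ := hβ
  obtain ⟨c, hc, hslope⟩ := exists_hasDerivAt_eq_slope φ φ' (by linarith : β < 2 * β)
    (continuousOn_Icc_of_hasDerivWithinAt hd1 hβ₀.le (by linarith))
    fun t ht => hasDerivAt_of_mem_Ioo hd1 ⟨by linarith [ht.1], by linarith [ht.2]⟩
  have hc' : φ' c = φ' β := by
    rw [hslope, hβeq, show 2 * β - β = β by ring, mul_div_cancel_left₀ _ hβ₀.ne']
  constructor
  · by_contra! hkβ
    exact (strictMonoOn_Icc_of_hasDerivWithinAt_pos hd2 hk.1.le le_rfl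
      (fun t ht => hconv t (Ioo_subset_Ioc_self ht)) ⟨hkβ, by linarith⟩
      ⟨by linarith [hc.1], by linarith [hc.2]⟩ hc.1).ne hc'.symm
  · by_contra! hk2β
    exact (strictAntiOn_Icc_of_hasDerivWithinAt_neg hd2 le_rfl hk.2.le
      (fun t ht => hconc t (Ioo_subset_Ico_self ht)) ⟨hβ₀.le, by linarith [hc.1]⟩
      ⟨by linarith [hc.1], by linarith [hc.2]⟩ hc.1).ne' hc'.symm

lemma sub_tangent_le (hd1 : ∀ t ∈ Icc (0:ℝ) 2, HasDerivWithinAt φ (φ' t) (Icc 0 2) t)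
    (hd2 : ∀ t ∈ Icc (0:ℝ) 2, HasDerivWithinAt φ' (φ'' t) (Icc 0 2) t) (hk : k ∈ Ioo (0:ℝ) 2)
    (hconc : ∀ t ∈ Ico (0:ℝ) k, φ'' t < 0) (hconv : ∀ t ∈ Ioc k 2, 0 < φ'' t)
    (hβ : β ∈ Ioo (0:ℝ) 1) (hβeq : φ (2 * β) - φ β = β * φ' β) :
    ∀ t ∈ Icc 0 (2 * β), φ t - φ' β * t ≤ φ β - φ' β * β := by
  obtain ⟨hβk, hk2β⟩ := inflection_mem_Ioo hd1 hd2 hk hconc hconv hβ hβeq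
  have hg := hasDerivWithinAt_sub_mul hd1 (φ' β)
  have hanti := strictAntiOn_Icc_of_hasDerivWithinAt_neg hd2 le_rfl hk.2.le
    fun t ht => hconc t (Ioo_subset_Ico_self ht)
  have hinc : MonotoneOn (fun t => φ t - φ' β * t) (Icc 0 β) :=
    monotoneOn_of_hasDerivWithinAt_nonneg (convex_Icc 0 β)
      (continuousOn_Icc_of_hasDerivWithinAt hg le_rfl (by linarith [hβ.2]))
      (hasDerivWithinAt_interior_Icc hg le_rfl (by linarith [hβ.2])) fun t ht => by
        rw [interior_Icc] at ht
        exact sub_nonneg.2 (hanti ⟨ht.1.le, by linarith [ht.2]⟩ ⟨hβ.1.le, hβk.le⟩ ht.2).le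
  have hdec : AntitoneOn (fun t => φ t - φ' β * t) (Icc β k) :=
    antitoneOn_of_hasDerivWithinAt_nonpos (convex_Icc β k)
      (continuousOn_Icc_of_hasDerivWithinAt hg hβ.1.le hk.2.le)
      (hasDerivWithinAt_interior_Icc hg hβ.1.le hk.2.le) fun t ht => by
        rw [interior_Icc] at ht
        exact sub_nonpos.2 (hanti ⟨hβ.1.le, hβk.le⟩ ⟨by linarith [ht.1], ht.2.le⟩ ht.1).le
  intro t ht
  rcases le_total t β with htβ | hβt
  · exact hinc ⟨ht.1, htβ⟩ ⟨hβ.1.le, le_rfl⟩ htβ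
  rcases le_total t k with htk | hkt
  · exact hdec ⟨le_rfl, hβk.le⟩ ⟨hβt, htk⟩ hβt
  have hk_le : φ k - φ' β * k ≤ φ β - φ' β * β := hdec ⟨le_rfl, hβk.le⟩ ⟨hβk.le, le_rfl⟩ hβk.le
  have h2β_le : φ (2 * β) - φ' β * (2 * β) ≤ φ β - φ' β * β := by linarith
  exact ((convexOn_sub_mul hd1 hd2 hk.1.le hconv (φ' β)).le_max_of_mem_Icc
    ⟨le_rfl, hk.2.le⟩ ⟨hk2β.le, by linarith [hβ.2]⟩ ⟨hkt, ht.2⟩).trans (max_le hk_le h2β_le)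

lemma sub_tangent_ge (hd1 : ∀ t ∈ Icc (0:ℝ) 2, HasDerivWithinAt φ (φ' t) (Icc 0 2) t)
    (hd2 : ∀ t ∈ Icc (0:ℝ) 2, HasDerivWithinAt φ' (φ'' t) (Icc 0 2) t) (hk : k ∈ Ioo (0:ℝ) 2)
    (hconc : ∀ t ∈ Ico (0:ℝ) k, φ'' t < 0) (hconv : ∀ t ∈ Ioc k 2, 0 < φ'' t)
    (hβ : β ∈ Ioo (0:ℝ) 1) (hβeq : φ (2 * β) - φ β = β * φ' β) :
    ∀ t ∈ Icc (2 * β) 2, φ β - φ' β * β ≤ φ t - φ' β * t := by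
  obtain ⟨hβk, hk2β⟩ := inflection_mem_Ioo hd1 hd2 hk hconc hconv hβ hβeq
  have h2β : φ (2 * β) - φ' β * (2 * β) = φ β - φ' β * β := by linarith
  have hk_le := sub_tangent_le hd1 hd2 hk hconc hconv hβ hβeq k ⟨hk.1.le, hk2β.le⟩
  intro t ht
  rw [← h2β]
  exact (convexOn_sub_mul hd1 hd2 hk.1.le hconv (φ' β)).le_right_of_left_le''
    ⟨le_rfl, hk.2.le⟩ ⟨by linarith [ht.1], ht.2⟩ hk2β ht.1 (h2β ▸ hk_le)

end ConcaveConvex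

lemma apply_add_le_average_two_mul_max {g : ℝ → ℝ} {β x y : ℝ} (hβ : β ∈ Icc (0:ℝ) 1)
    (hle : ∀ t ∈ Icc 0 (2 * β), g t ≤ g β) (hge : ∀ t ∈ Icc (2 * β) 2, g β ≤ g t)
    (hconv : ConvexOn ℝ (Icc (2 * β) 2) g) (hx : x ∈ Icc (0:ℝ) 1) (hy : y ∈ Icc (0:ℝ) 1) :
    g (x + y) ≤ (g (2 * max x β) + g (2 * max y β)) / 2 := by
  have hX : 2 * max x β ∈ Icc (2 * β) 2 :=
    ⟨by linarith [le_max_right x β], by linarith [max_le hx.2 hβ.2]⟩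
  have hY : 2 * max y β ∈ Icc (2 * β) 2 :=
    ⟨by linarith [le_max_right y β], by linarith [max_le hy.2 hβ.2]⟩
  have hβ_le : g β ≤ (g (2 * max x β) + g (2 * max y β)) / 2 := by
    linarith [hge _ hX, hge _ hY]
  rcases le_total (x + y) (2 * β) with hsum | hsum
  · exact (hle _ ⟨add_nonneg hx.1 hy.1, hsum⟩).trans hβ_le
  have hmid : g (max x β + max y β) ≤ (g (2 * max x β) + g (2 * max y β)) / 2 := by
    have := hconv.2 hX hY (by norm_num : (0:ℝ) ≤ 1 / 2) (by norm_num : (0:ℝ) ≤ 1 / 2)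
      (by norm_num)
    simp only [smul_eq_mul] at this
    rw [show 1 / 2 * (2 * max x β) + 1 / 2 * (2 * max y β) = max x β + max y β by ring] at this
    linarith
  calc g (x + y) ≤ max (g (2 * β)) (g (max x β + max y β)) :=
        hconv.le_max_of_mem_Icc (left_mem_Icc.2 (by linarith [hβ.2]))
          ⟨by linarith [hX.1, hY.1], by linarith [hX.2, hY.2]⟩
          ⟨hsum, add_le_add (le_max_left x β) (le_max_left y β)⟩
    _ ≤ _ := max_le ((hle _ ⟨by linarith [hβ.1], le_rfl⟩).trans hβ_le) hmid

/-- For `x ≥ β` this is `φ (2 * x) / 2`; for `x < β` it is `(φ β + s * (2 * x - β)) / 2`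
provided `φ (2 * β) - φ β = β * s`. -/
noncomputable def dualPotential (φ : ℝ → ℝ) (s β x : ℝ) : ℝ :=
  φ (2 * max x β) / 2 + s * (x - max x β)

lemma continuousOn_dualPotential {φ : ℝ → ℝ} {β : ℝ} (hφ : ContinuousOn φ (Icc 0 2))
    (hβ : β ≤ 1) (s : ℝ) : ContinuousOn (dualPotential φ s β) (Icc 0 1) :=
  ((hφ.comp (by fun_prop : Continuous fun x : ℝ => 2 * max x β).continuousOn
      fun x hx => ⟨by linarith [le_max_left x β, hx.1], by linarith [max_le hx.2 hβ]⟩).div_const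
    2).add (by fun_prop)

lemma le_dualPotential_add {φ φ' φ'' : ℝ → ℝ} {k β x y : ℝ}
    (hd1 : ∀ t ∈ Icc (0:ℝ) 2, HasDerivWithinAt φ (φ' t) (Icc 0 2) t)
    (hd2 : ∀ t ∈ Icc (0:ℝ) 2, HasDerivWithinAt φ' (φ'' t) (Icc 0 2) t) (hk : k ∈ Ioo (0:ℝ) 2)
    (hconc : ∀ t ∈ Ico (0:ℝ) k, φ'' t < 0) (hconv : ∀ t ∈ Ioc k 2, 0 < φ'' t)
    (hβ : β ∈ Ioo (0:ℝ) 1) (hβeq : φ (2 * β) - φ β = β * φ' β)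
    (hx : x ∈ Icc (0:ℝ) 1) (hy : y ∈ Icc (0:ℝ) 1) :
    φ (x + y) ≤ dualPotential φ (φ' β) β x + dualPotential φ (φ' β) β y := by
  have := apply_add_le_average_two_mul_max (g := fun t => φ t - φ' β * t) ⟨hβ.1.le, hβ.2.le⟩
    (sub_tangent_le hd1 hd2 hk hconc hconv hβ hβeq)
    (sub_tangent_ge hd1 hd2 hk hconc hconv hβ hβeq)
    ((convexOn_sub_mul hd1 hd2 hk.1.le hconv (φ' β)).subset
      (Icc_subset_Icc (inflection_mem_Ioo hd1 hd2 hk hconc hconv hβ hβeq).2.le le_rfl)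
      (convex_Icc _ _)) hx hy
  simp only [dualPotential]
  linarith

lemma dualPotential_add_reflectBelow {φ : ℝ → ℝ} {s β x : ℝ}
    (hβeq : φ (2 * β) - φ β = β * s) (hx : 0 ≤ x) :
    φ (x + reflectBelow β x) = dualPotential φ s β x + dualPotential φ s β (reflectBelow β x) := by
  unfold reflectBelow dualPotential
  split_ifs with h
  · rw [max_eq_right h.le, max_eq_right (by linarith : β - x ≤ β), add_sub_cancel]
    linear_combination -hβeq
  · rw [max_eq_left (not_lt.1 h), two_mul]
    ring

theorem stmt11_general (φ φ' φ'' : ℝ → ℝ)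
    (hd1 : ∀ t ∈ Icc (0:ℝ) 2, HasDerivWithinAt φ (φ' t) (Icc 0 2) t)
    (hd2 : ∀ t ∈ Icc (0:ℝ) 2, HasDerivWithinAt φ' (φ'' t) (Icc 0 2) t)
    (k : ℝ) (hk : k ∈ Ioo (0:ℝ) 2)
    (hconc : ∀ t ∈ Ico (0:ℝ) k, φ'' t < 0)
    (hconv : ∀ t ∈ Ioc k 2, 0 < φ'' t)
    (β : ℝ) (hβ : β ∈ Ioo (0:ℝ) 1)
    (hβeq : φ (2 * β) - φ β = β * φ' β)
    (Γ : ℝ → ℝ)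
    (hΓ1 : ∀ x, 0 ≤ x → x < β → Γ x = β - x)
    (hΓ2 : ∀ x, β ≤ x → x ≤ 1 → Γ x = x) :
    IsDoublyStochastic
      (Measure.map (fun x => (x, Γ x)) (volume.restrict (Icc (0:ℝ) 1))) ∧
    (∀ π : Measure (ℝ × ℝ), IsDoublyStochastic π →
      ∫ p, φ (p.1 + p.2) ∂π ≤
        ∫ p, φ (p.1 + p.2)
          ∂(Measure.map (fun x => (x, Γ x)) (volume.restrict (Icc (0:ℝ) 1)))) ∧
    ∫ p, φ (p.1 + p.2)
        ∂(Measure.map (fun x => (x, Γ x)) (volume.restrict (Icc (0:ℝ) 1))) =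
      ∫ x in (0:ℝ)..1, φ (x + Γ x) := by
  have hΓ : EqOn Γ (reflectBelow β) (Icc 0 1) := fun x hx => by
    unfold reflectBelow
    split_ifs with h
    exacts [hΓ1 x hx.1 h, hΓ2 x (not_lt.1 h) hx.2]
  have hgraph : Measure.map (fun x => (x, Γ x)) (volume.restrict (Icc (0:ℝ) 1)) =
      Measure.map (fun x => (x, reflectBelow β x)) (volume.restrict (Icc (0:ℝ) 1)) :=
    Measure.map_congr ((ae_restrict_iff' measurableSet_Icc).2
      (ae_of_all _ fun x hx => congrArg (Prod.mk x) (hΓ hx)))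
  have hR := measurePreserving_reflectBelow hβ.1 hβ.2.le
  have hφ : ContinuousOn φ (Icc 0 2) := fun t ht => (hd1 t ht).continuousWithinAt
  have hc : ContinuousOn (fun p : ℝ × ℝ => φ (p.1 + p.2)) (Icc 0 1 ×ˢ Icc 0 1) :=
    hφ.comp (by fun_prop : Continuous fun p : ℝ × ℝ => p.1 + p.2).continuousOn
      fun p hp => ⟨add_nonneg hp.1.1 hp.2.1, by linarith [hp.1.2, hp.2.2]⟩
  have hF : IntegrableOn (dualPotential φ (φ' β) β) (Icc 0 1) :=
    (continuousOn_dualPotential hφ hβ.2.le (φ' β)).integrableOn_Icc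
  rw [hgraph]
  refine ⟨isDoublyStochastic_map_graph hR, fun π hπ => ?_, ?_⟩
  · rw [integral_map_graph_eq_add hR hc hF hF
      fun x hx => dualPotential_add_reflectBelow hβeq hx.1]
    exact hπ.integral_le_of_le_add hc hF hF
      fun x hx y hy => le_dualPotential_add hd1 hd2 hk hconc hconv hβ hβeq hx hy
  · rw [integral_map_graph hR hc, intervalIntegral.integral_of_le zero_le_one,
      integral_Icc_eq_integral_Ioc]
    exact setIntegral_congr_fun measurableSet_Ioc fun x hx => by
      rw [hΓ (Ioc_subset_Icc_self hx)]

theorem stmt11 (φ φ' φ'' : ℝ → ℝ)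
    (hd1 : ∀ t ∈ Icc (0:ℝ) 2, HasDerivWithinAt φ (φ' t) (Icc 0 2) t)
    (hd2 : ∀ t ∈ Icc (0:ℝ) 2, HasDerivWithinAt φ' (φ'' t) (Icc 0 2) t)
    (hc : ContinuousOn φ'' (Icc (0:ℝ) 2))
    (k : ℝ) (hk : k ∈ Ioo (0:ℝ) 2)
    (hconc : ∀ t ∈ Ico (0:ℝ) k, φ'' t < 0)
    (hconv : ∀ t ∈ Ioc k 2, 0 < φ'' t)
    (β : ℝ) (hβ : β ∈ Ioo (0:ℝ) 1)
    (hβeq : φ (2 * β) - φ β = β * φ' β)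
    (Γ : ℝ → ℝ)
    (hΓ1 : ∀ x, 0 ≤ x → x < β → Γ x = β - x)
    (hΓ2 : ∀ x, β ≤ x → x ≤ 1 → Γ x = x) :
    IsDoublyStochastic
      (Measure.map (fun x => (x, Γ x)) (volume.restrict (Icc (0:ℝ) 1))) ∧
    (∀ π : Measure (ℝ × ℝ), IsDoublyStochastic π →
      ∫ p, φ (p.1 + p.2) ∂π ≤
        ∫ p, φ (p.1 + p.2)
          ∂(Measure.map (fun x => (x, Γ x)) (volume.restrict (Icc (0:ℝ) 1)))) ∧
    ∫ p, φ (p.1 + p.2)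
        ∂(Measure.map (fun x => (x, Γ x)) (volume.restrict (Icc (0:ℝ) 1))) =
      ∫ x in (0:ℝ)..1, φ (x + Γ x) :=
  stmt11_general φ φ' φ'' hd1 hd2 k hk hconc hconv β hβ hβeq Γ hΓ1 hΓ2
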